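/- arXiv:1810.08585 — 2 statements merged into one kernel-verified Lean document; each statement's English description precedes it below -/
import Mathlib

section
/- In a distributive meet-semilattice, a proper filter F is irreducible if and only if its complement A − F is an order ideal. -/
namespace DS

variable {A : Type*} [SemilatticeInf A] [OrderTop A]

/-- A filter: an upset containing the top element, closed under meets. -/
def IsFilt (F : Set A) : Prop :=
  IsUpperSet F ∧ ⊤ ∈ F ∧ ∀ ⦃a b : A⦄, a ∈ F → b ∈ F → a ⊓ b ∈ F

/-- An irreducible (prime) filter: a proper filter that is meet-irreducible
among filters. -/
def IsIrred (F : Set A) : Prop :=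
  IsFilt F ∧ F ≠ Set.univ ∧
    ∀ F₁ F₂ : Set A, IsFilt F₁ → IsFilt F₂ → F = F₁ ∩ F₂ → F = F₁ ∨ F = F₂

/-- An order ideal: a downset in which every pair of elements has an upper
bound in the set. -/
def IsOrdIdeal (I : Set A) : Prop :=
  IsLowerSet I ∧ ∀ a ∈ I, ∀ b ∈ I, ∃ c ∈ I, a ≤ c ∧ b ≤ c

/-- Distributivity for a meet-semilattice with top. -/
def IsDistrib (A : Type*) [SemilatticeInf A] [OrderTop A] : Prop :=
  ∀ a b c : A, a ⊓ b ≤ c → ∃ a₁ b₁ : A, a ≤ a₁ ∧ b ≤ b₁ ∧ c = a₁ ⊓ b₁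

/-- The set of irreducible filters of `A`, ordered by inclusion. -/
def Spec (A : Type*) [SemilatticeInf A] [OrderTop A] : Type _ :=
  {P : Set A // IsIrred P}

instance : PartialOrder (Spec A) := Subtype.partialOrder _

/-- `beta a` = the set of irreducible filters containing `a`. -/
def beta (a : A) : Set (Spec A) := {P : Spec A | a ∈ P.1}

/-- The topology on `Spec A` generated by the basis `{beta aᶜ : a ∈ A}`. -/
def specTop (A : Type*) [SemilatticeInf A] [OrderTop A] : TopologicalSpace (Spec A) :=
  TopologicalSpace.generateFrom {s : Set (Spec A) | ∃ a : A, s = (beta a)ᶜ}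

/-- Special basic saturated subsets: intersections of dually directed families
of basic opens `beta aᶜ`. -/
def SBS (Z : Set (Spec A)) : Prop :=
  ∃ L : Set A, (∀ a ∈ L, ∀ b ∈ L, ∃ c ∈ L, beta a ∪ beta b ⊆ beta c) ∧
    Z = ⋂ a ∈ L, (beta a)ᶜ

/-- The order ideal associated to a special basic saturated set. -/
def IA (Z : Set (Spec A)) : Set A := {a : A | beta a ∩ Z = ∅}

/-- The special basic saturated set associated to an order ideal. -/
def alphaI (I : Set A) : Set (Spec A) := {P : Spec A | P.1 ∩ I = ∅}

/-- The filter associated to a closed set. -/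
def FY (Y : Set (Spec A)) : Set A := {a : A | Y ⊆ beta a}

/-- The multirelation `R_m` on the dual space. -/
def Rm (m : A → A) (P : Spec A) (Z : Set (Spec A)) : Prop :=
  {a : A | m a ∈ P.1} ∩ IA Z = ∅

/-- The multirelation `G_m` on the dual space. -/
def Gm (m : A → A) (P : Spec A) (Y : Set (Spec A)) : Prop :=
  FY Y ⊆ {a : A | m a ∈ P.1}

/-- The composed relation `R_m²`. -/
def Rm2 (m : A → A) (P : Spec A) (Z : Set (Spec A)) : Prop :=
  ∃ S : Set (Spec A), SBS S ∧ Rm m P S ∧ ∀ x ∈ S, Rm m x Z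

end DS

open DS Set

/-!
If `Fᶜ` is directed and `F = F₁ ∩ F₂` with both `Fᵢ` strictly larger, pick `a ∈ F₁ \ F`,
`b ∈ F₂ \ F`; a common upper bound outside `F` lies in `F₁ ∩ F₂ = F`, a contradiction.
Conversely, if `a, b ∉ F` have all their common upper bounds in `F`, then `F` is the
intersection of the filters generated by `F ∪ {a}` and `F ∪ {b}`: distributivity, applied
twice, writes any element of that intersection as a meet of elements of `F`.
-/

namespace DS

variable {A : Type*} [SemilatticeInf A] {F : Set A}

def adjoin (F : Set A) (d : A) : Set A := {x | ∃ f ∈ F, f ⊓ d ≤ x}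

theorem subset_adjoin (d : A) : F ⊆ adjoin F d := fun x hx => ⟨x, hx, inf_le_left⟩

variable [OrderTop A]

theorem IsFilt.mem_adjoin_self (hF : IsFilt F) (d : A) : d ∈ adjoin F d :=
  ⟨⊤, hF.2.1, inf_le_right⟩

theorem IsFilt.isFilt_adjoin (hF : IsFilt F) (d : A) : IsFilt (adjoin F d) := by
  refine ⟨fun x y hxy ⟨f, hf, hfx⟩ => ⟨f, hf, hfx.trans hxy⟩, ⟨⊤, hF.2.1, le_top⟩, ?_⟩
  rintro x y ⟨f, hf, hfx⟩ ⟨g, hg, hgy⟩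
  exact ⟨f ⊓ g, hF.2.2 hf hg, le_inf (inf_le_inf_right d inf_le_left |>.trans hfx)
    (inf_le_inf_right d inf_le_right |>.trans hgy)⟩

theorem IsFilt.exists_of_inf_le (hA : IsDistrib A) (hF : IsFilt F) {h a x : A} (hh : h ∈ F)
    (hx : h ⊓ a ≤ x) : ∃ a₁, a ≤ a₁ ∧ x ≤ a₁ ∧ (a₁ ∈ F → x ∈ F) := by
  obtain ⟨h₁, a₁, hh₁, ha₁, rfl⟩ := hA h a x hx
  exact ⟨a₁, ha₁, inf_le_right, hF.2.2 (hF.1 hh₁ hh)⟩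

theorem IsFilt.adjoin_inter_adjoin_subset (hA : IsDistrib A) (hF : IsFilt F) {a b : A}
    (hub : ∀ c, a ≤ c → b ≤ c → c ∈ F) : adjoin F a ∩ adjoin F b ⊆ F := by
  rintro x ⟨⟨f, hf, hfx⟩, ⟨g, hg, hgx⟩⟩
  have hfg : f ⊓ g ∈ F := hF.2.2 hf hg
  obtain ⟨a₁, ha₁, hxa₁, ha₁x⟩ :=
    hF.exists_of_inf_le hA hfg ((inf_le_inf_right a inf_le_left).trans hfx)
  obtain ⟨b₁, hb₁, ha₁b₁, hb₁a₁⟩ :=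
    hF.exists_of_inf_le hA hfg (((inf_le_inf_right b inf_le_right).trans hgx).trans hxa₁)
  exact ha₁x (hb₁a₁ (hub b₁ (ha₁.trans ha₁b₁) hb₁))

theorem IsIrred.isOrdIdeal_compl (hA : IsDistrib A) (hF : IsIrred F) : IsOrdIdeal Fᶜ := by
  obtain ⟨hfilt : IsFilt F, -, hirr⟩ := hF
  refine ⟨hfilt.1.compl, fun a ha b hb => ?_⟩
  by_contra! hnone
  have hub : ∀ c, a ≤ c → b ≤ c → c ∈ F := fun c hac hbc =>
    by_contra fun hc => hnone c hc hac hbc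
  have hEq : F = adjoin F a ∩ adjoin F b :=
    (subset_inter (subset_adjoin a) (subset_adjoin b)).antisymm
      (hfilt.adjoin_inter_adjoin_subset hA hub)
  rcases hirr _ _ (hfilt.isFilt_adjoin a) (hfilt.isFilt_adjoin b) hEq with h | h
  · exact ha (h ▸ hfilt.mem_adjoin_self a)
  · exact hb (h ▸ hfilt.mem_adjoin_self b)

theorem IsFilt.isIrred_of_isOrdIdeal_compl (hF : IsFilt F) (hprop : F ≠ univ)
    (hI : IsOrdIdeal Fᶜ) : IsIrred F := by
  refine ⟨hF, hprop, fun F₁ F₂ h₁ h₂ hEq => ?_⟩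
  by_contra! hne
  obtain ⟨a, ha₁, haF⟩ :=
    exists_of_ssubset ((hEq ▸ inter_subset_left : F ⊆ F₁).ssubset_of_ne hne.1)
  obtain ⟨b, hb₂, hbF⟩ :=
    exists_of_ssubset ((hEq ▸ inter_subset_right : F ⊆ F₂).ssubset_of_ne hne.2)
  obtain ⟨c, hcF, hac, hbc⟩ := hI.2 a haF b hbF
  exact hcF (hEq ▸ ⟨h₁.1 hac ha₁, h₂.1 hbc hb₂⟩)

end DS

theorem stmt1 {A : Type*} [SemilatticeInf A] [OrderTop A] (hA : IsDistrib A)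
    (F : Set A) (hF : IsFilt F) (hprop : F ≠ Set.univ) :
    IsIrred F ↔ IsOrdIdeal Fᶜ :=
  ⟨IsIrred.isOrdIdeal_compl hA, hF.isIrred_of_isOrdIdeal_compl hprop⟩
end

section
/- Let A be a distributive meet-semilattice, Y a nonempty closed subset of X(A) and Z a special basic saturated subset of X(A). Then the filter F_Y = {a ∈ A : Y ⊆ β(a)} and the order ideal I_A(Z) = {a ∈ A : β(a) ∩ Z = ∅} satisfy: F_Y ∩ I_A(Z) = ∅ if and only if Y ∩ Z ≠ ∅. -/
namespace DS

variable {A : Type*} [SemilatticeInf A]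

def filtAdjoin (F : Set A) (x : A) : Set A := {z | ∃ q ∈ F, q ⊓ x ≤ z}

lemma subset_filtAdjoin (F : Set A) (x : A) : F ⊆ filtAdjoin F x :=
  fun q hq => ⟨q, hq, inf_le_left⟩

variable [OrderTop A]

lemma isFilt_Ici (a : A) : IsFilt (Set.Ici a) :=
  ⟨isUpperSet_Ici a, le_top, fun _ _ => le_inf⟩

lemma isFilt_sUnion {C : Set (Set A)} (hC : ∀ G ∈ C, IsFilt G) (hchain : IsChain (· ⊆ ·) C)
    (hne : C.Nonempty) : IsFilt (⋃₀ C) := by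
  obtain ⟨G₀, hG₀⟩ := hne
  refine ⟨isUpperSet_sUnion fun G hG => (hC G hG).1, ⟨G₀, hG₀, (hC G₀ hG₀).2.1⟩, ?_⟩
  rintro a b ⟨G₁, hG₁, ha⟩ ⟨G₂, hG₂, hb⟩
  rcases hchain.total hG₁ hG₂ with h | h
  · exact ⟨G₂, hG₂, (hC G₂ hG₂).2.2 (h ha) hb⟩
  · exact ⟨G₁, hG₁, (hC G₁ hG₁).2.2 ha (h hb)⟩

lemma isFilt_filtAdjoin {F : Set A} (hF : IsFilt F) (x : A) : IsFilt (filtAdjoin F x) := by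
  refine ⟨fun u v huv ⟨q, hq, h⟩ => ⟨q, hq, h.trans huv⟩, ⟨⊤, hF.2.1, le_top⟩, ?_⟩
  rintro u v ⟨q₁, hq₁, h₁⟩ ⟨q₂, hq₂, h₂⟩
  exact ⟨q₁ ⊓ q₂, hF.2.2 hq₁ hq₂, le_inf ((inf_le_inf_right x inf_le_left).trans h₁)
    ((inf_le_inf_right x inf_le_right).trans h₂)⟩

lemma mem_filtAdjoin_self {F : Set A} (hF : IsFilt F) (x : A) : x ∈ filtAdjoin F x :=
  ⟨⊤, hF.2.1, inf_le_right⟩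

lemma exists_notMem_ge_of_inf_le (hA : IsDistrib A) {F : Set A} (hF : IsFilt F)
    {p x y z : A} (hp : p ∈ F) (hz : z ∉ F) (hx : p ⊓ x ≤ z) (hy : p ⊓ y ≤ z) :
    ∃ c ∉ F, x ≤ c ∧ y ≤ c := by
  obtain ⟨p₁, x₁, hp₁, hx₁, rfl⟩ := hA p x z hx
  obtain ⟨p₂, y₁, hp₂, hy₁, hx₁y₁⟩ := hA p y x₁ (hy.trans inf_le_right)
  refine ⟨y₁, fun hy₁F => hz ?_, hx₁.trans (hx₁y₁ ▸ inf_le_right), hy₁⟩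
  have hx₁F : x₁ ∈ F := hx₁y₁ ▸ hF.2.2 (hF.1 hp₂ hp) hy₁F
  exact hF.2.2 (hF.1 hp₁ hp) hx₁F

lemma IsIrred.directedOn_compl (hA : IsDistrib A) {P : Set A} (hP : IsIrred P) :
    DirectedOn (· ≤ ·) Pᶜ := by
  intro x hx y hy
  have hne : P ≠ filtAdjoin P x ∩ filtAdjoin P y := by
    intro h
    rcases hP.2.2 _ _ (isFilt_filtAdjoin hP.1 x) (isFilt_filtAdjoin hP.1 y) h with h' | h'
    · exact hx (h' ▸ mem_filtAdjoin_self hP.1 x)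
    · exact hy (h' ▸ mem_filtAdjoin_self hP.1 y)
  obtain ⟨z, ⟨⟨q₁, hq₁, h₁⟩, ⟨q₂, hq₂, h₂⟩⟩, hz⟩ := Set.exists_of_ssubset
    ((Set.subset_inter (subset_filtAdjoin P x) (subset_filtAdjoin P y)).ssubset_of_ne hne)
  exact exists_notMem_ge_of_inf_le hA hP.1 (hP.1.2.2 hq₁ hq₂) hz
    ((inf_le_inf_right x inf_le_left).trans h₁) ((inf_le_inf_right y inf_le_right).trans h₂)

lemma isIrred_of_directedOn_compl {P : Set A} (hP : IsFilt P) (hne : P ≠ Set.univ)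
    (hdir : DirectedOn (· ≤ ·) Pᶜ) : IsIrred P := by
  refine ⟨hP, hne, fun F₁ F₂ h₁ h₂ heq => ?_⟩
  by_contra! hne'
  have hP₁ : P ⊆ F₁ := heq ▸ Set.inter_subset_left
  have hP₂ : P ⊆ F₂ := heq ▸ Set.inter_subset_right
  obtain ⟨x, hx₁, hx⟩ := Set.exists_of_ssubset (hP₁.ssubset_of_ne hne'.1)
  obtain ⟨y, hy₂, hy⟩ := Set.exists_of_ssubset (hP₂.ssubset_of_ne hne'.2)
  obtain ⟨c, hc, hxc, hyc⟩ := hdir x hx y hy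
  exact hc (heq ▸ ⟨h₁.1 hxc hx₁, h₂.1 hyc hy₂⟩)

lemma directedOn_compl_of_maximal (hA : IsDistrib A) {F I Q : Set A}
    (hI : DirectedOn (· ≤ ·) I) (hQ : Maximal (fun G => IsFilt G ∧ F ⊆ G ∧ Disjoint G I) Q) :
    DirectedOn (· ≤ ·) Qᶜ := by
  obtain ⟨hQF, hFQ, hQI⟩ := hQ.1
  have exists_inf_le_of_notMem : ∀ x ∉ Q, ∃ z ∈ I, ∃ q ∈ Q, q ⊓ x ≤ z := by
    intro x hx
    by_contra! hcon
    refine hx (hQ.2 ⟨isFilt_filtAdjoin hQF x, hFQ.trans (subset_filtAdjoin Q x), ?_⟩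
      (subset_filtAdjoin Q x) (mem_filtAdjoin_self hQF x))
    exact Set.disjoint_right.2 fun z hz ⟨q, hq, h⟩ => hcon z hz q hq h
  intro x hx y hy
  obtain ⟨z₁, hz₁, q₁, hq₁, h₁⟩ := exists_inf_le_of_notMem x hx
  obtain ⟨z₂, hz₂, q₂, hq₂, h₂⟩ := exists_inf_le_of_notMem y hy
  obtain ⟨z, hz, hz₁z, hz₂z⟩ := hI z₁ hz₁ z₂ hz₂
  exact exists_notMem_ge_of_inf_le hA hQF (hQF.2.2 hq₁ hq₂) (hQI.notMem_of_mem_right hz)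
    (((inf_le_inf_right x inf_le_left).trans h₁).trans hz₁z)
    (((inf_le_inf_right y inf_le_right).trans h₂).trans hz₂z)

/-- The prime filter theorem for distributive meet-semilattices. -/
theorem exists_isIrred_of_disjoint (hA : IsDistrib A) {F I : Set A} (hF : IsFilt F)
    (hI : DirectedOn (· ≤ ·) I) (hIne : I.Nonempty) (hFI : Disjoint F I) :
    ∃ P : Spec A, F ⊆ P.1 ∧ Disjoint P.1 I := by
  obtain ⟨Q, hFQ, hQ⟩ := zorn_subset_nonempty {G | IsFilt G ∧ F ⊆ G ∧ Disjoint G I}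
    (fun C hC hchain hne => ⟨⋃₀ C,
      ⟨isFilt_sUnion (fun G hG => (hC hG).1) hchain hne,
        hne.elim fun G hG => (hC hG).2.1.trans (Set.subset_sUnion_of_mem hG),
        Set.disjoint_sUnion_left.2 fun G hG => (hC hG).2.2⟩,
      fun _ => Set.subset_sUnion_of_mem⟩)
    F ⟨hF, subset_rfl, hFI⟩
  obtain ⟨hQF, -, hQI⟩ := hQ.1
  obtain ⟨c, hc⟩ := hIne
  have hQne : Q ≠ Set.univ := fun h => hQI.notMem_of_mem_right hc (h ▸ Set.mem_univ c)
  exact ⟨⟨Q, isIrred_of_directedOn_compl hQF hQne (directedOn_compl_of_maximal hA hI hQ)⟩,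
    hFQ, hQI⟩

lemma beta_subset_beta_iff (hA : IsDistrib A) {a b : A} : beta a ⊆ beta b ↔ a ≤ b := by
  refine ⟨fun h => ?_, fun h P hP => P.2.1.1 h hP⟩
  by_contra hab
  obtain ⟨P, haP, hbP⟩ := exists_isIrred_of_disjoint hA (isFilt_Ici a)
    (directedOn_singleton b) (Set.singleton_nonempty b)
    (Set.disjoint_singleton_right.2 hab)
  exact hbP.notMem_of_mem_right rfl (h (haP le_rfl))

lemma isFilt_FY (Y : Set (Spec A)) : IsFilt (FY Y) :=
  ⟨fun _ _ hab ha P hP => P.2.1.1 hab (ha hP), fun P _ => P.2.1.2.1,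
    fun _ _ ha hb P hP => P.2.1.2.2 (ha hP) (hb hP)⟩

section Topology

attribute [local instance] specTop

lemma isTopologicalBasis_compl_beta (hA : IsDistrib A) :
    TopologicalSpace.IsTopologicalBasis {s : Set (Spec A) | ∃ a : A, s = (beta a)ᶜ} := by
  refine ⟨?_, ?_, rfl⟩
  · rintro _ ⟨a, rfl⟩ _ ⟨b, rfl⟩ P ⟨ha, hb⟩
    obtain ⟨c, hc, hac, hbc⟩ := P.2.directedOn_compl hA a ha b hb
    exact ⟨_, ⟨c, rfl⟩, hc, Set.subset_inter
      (Set.compl_subset_compl.2 ((beta_subset_beta_iff hA).2 hac))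
      (Set.compl_subset_compl.2 ((beta_subset_beta_iff hA).2 hbc))⟩
  · refine Set.eq_univ_of_forall fun P => ?_
    obtain ⟨a, ha⟩ := (Set.ne_univ_iff_exists_notMem _).1 P.2.2.1
    exact ⟨_, ⟨a, rfl⟩, ha⟩

lemma mem_of_FY_subset (hA : IsDistrib A) {Y : Set (Spec A)}
    (hY : IsClosed Y) {P : Spec A} (hP : FY Y ⊆ P.1) : P ∈ Y := by
  by_contra hPY
  obtain ⟨_, ⟨c, rfl⟩, hc, hcY⟩ :=
    (isTopologicalBasis_compl_beta hA).exists_subset_of_mem_open hPY hY.isOpen_compl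
  exact hc (hP (Set.compl_subset_compl.1 hcY))

end Topology

end DS

open DS Set

theorem stmt5 {A : Type*} [SemilatticeInf A] [OrderTop A] (hA : IsDistrib A)
    (Y Z : Set (Spec A)) (hY : @IsClosed (Spec A) (specTop A) Y) (hYne : Y.Nonempty)
    (hZ : SBS Z) :
    FY Y ∩ IA Z = ∅ ↔ (Y ∩ Z).Nonempty := by
  constructor
  · intro hFI
    obtain ⟨L, hLdir, rfl⟩ := hZ
    rcases L.eq_empty_or_nonempty with rfl | hLne
    · obtain ⟨P, hP⟩ := hYne
      exact ⟨P, hP, by simp⟩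
    have hL : DirectedOn (· ≤ ·) L := fun a ha b hb =>
      (hLdir a ha b hb).imp fun c ⟨hc, hsub⟩ => ⟨hc,
        (beta_subset_beta_iff hA).1 (subset_union_left.trans hsub),
        (beta_subset_beta_iff hA).1 (subset_union_right.trans hsub)⟩
    have hL_IA : L ⊆ IA (⋂ a ∈ L, (beta a)ᶜ) := fun l hl =>
      eq_empty_of_forall_notMem fun P ⟨hPl, hPZ⟩ => mem_iInter₂.1 hPZ l hl hPl
    obtain ⟨P, hFP, hPL⟩ := exists_isIrred_of_disjoint hA (isFilt_FY Y) hL hLne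
      (disjoint_left.2 fun l hlY hl => (hFI ▸ ⟨hlY, hL_IA hl⟩ : l ∈ (∅ : Set A)))
    exact ⟨P, mem_of_FY_subset hA hY hFP,
      mem_iInter₂.2 fun l hl hPl => hPL.notMem_of_mem_left hPl hl⟩
  · rintro ⟨P, hPY, hPZ⟩
    exact eq_empty_of_forall_notMem fun a ⟨haY, haZ⟩ =>
      (haZ ▸ ⟨haY hPY, hPZ⟩ : P ∈ (∅ : Set (Spec A)))
end
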